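/- Suppose y(t) solves ẏ = f(y) on [0,T] with y(0) = y_0, f smooth, and λ(t) solves the adjoint ODE λ̇ = −λ·Df(y(t)) − (∂o/∂y)(y(t),t) backwards with λ(T) = 0. Then the Gâteaux derivative of O(y_0) = ∫₀ᵀ o(y(t),t) dt with respect to y_0 in direction δy_0 equals λ(0)·δy_0. -/

import Mathlib

/-- Continuous adjoint method: if `λ` solves the terminal-value adjoint ODE
`λ̇ = −λ·Df(y(t)) − ∂o/∂y(y(t),t)`, `λ(T) = 0`, then the Gâteaux derivative of
`O(y₀) = ∫₀ᵀ o(y(t),t) dt` with respect to the initial condition in direction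
`δy₀` equals `λ(0)·δy₀`. -/
theorem continuous_adjoint
    {N : ℕ} (T : ℝ) (hT : 0 < T)
    (f : EuclideanSpace ℝ (Fin N) → EuclideanSpace ℝ (Fin N))
    (hf : ContDiff ℝ (⊤ : ℕ∞) f)
    (o : EuclideanSpace ℝ (Fin N) → ℝ → ℝ)
    (ho : ContDiff ℝ (⊤ : ℕ∞) (fun p : EuclideanSpace ℝ (Fin N) × ℝ => o p.1 p.2))
    (y0 : EuclideanSpace ℝ (Fin N))
    -- a smooth local flow of the ODE `ẏ = f(y)`
    (Y : EuclideanSpace ℝ (Fin N) → ℝ → EuclideanSpace ℝ (Fin N))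
    (hY0 : ∀ z, Y z 0 = z)
    (hYode : ∀ z, ∀ t ∈ Set.Icc (0 : ℝ) T, HasDerivAt (Y z) (f (Y z t)) t)
    (hYsmooth : ContDiff ℝ (⊤ : ℕ∞) (fun p : EuclideanSpace ℝ (Fin N) × ℝ => Y p.1 p.2))
    (y : ℝ → EuclideanSpace ℝ (Fin N))
    (hy : y = Y y0)
    -- the adjoint covector
    (lam : ℝ → (EuclideanSpace ℝ (Fin N) →L[ℝ] ℝ))
    (hlamT : lam T = 0)
    (hlam : ∀ t ∈ Set.Icc (0 : ℝ) T,
      HasDerivAt lam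
        (-(lam t).comp (fderiv ℝ f (y t)) - fderiv ℝ (fun z => o z t) (y t)) t) :
    ∀ δy0 : EuclideanSpace ℝ (Fin N),
      HasDerivAt (fun s : ℝ => ∫ t in (0 : ℝ)..T, o (Y (y0 + s • δy0) t) t)
        (lam 0 δy0) 0 := by
  intro δ
  -- the perturbed flow as a function of (s, t)
  set F : ℝ × ℝ → EuclideanSpace ℝ (Fin N) := fun p => Y (y0 + p.1 • δ) p.2 with hFdef
  have hF : ContDiff ℝ (⊤ : ℕ∞) F :=
    hYsmooth.comp (f := fun p : ℝ × ℝ => (y0 + p.1 • δ, p.2)) (ContDiff.prodMk (contDiff_const.add (contDiff_fst.smul contDiff_const)) contDiff_snd)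
  have hFd : Differentiable ℝ F := hF.differentiable (by simp)
  -- first derivative
  set A : ℝ × ℝ → (ℝ × ℝ →L[ℝ] EuclideanSpace ℝ (Fin N)) := fderiv ℝ F with hAdef
  have hAs : ContDiff ℝ (⊤ : ℕ∞) A := (hF.fderiv_right (m := ((⊤ : ℕ∞) : WithTop ℕ∞)) ((by exact_mod_cast le_top))).of_le le_rfl
  have hAd : Differentiable ℝ A := hAs.differentiable (by simp)
  have hAc : Continuous A := hAs.continuous
  -- the variation
  set v : ℝ × ℝ → EuclideanSpace ℝ (Fin N) := fun p => A p (1, 0) with hvdef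
  have hvc : Continuous v := hAc.clm_apply continuous_const
  -- path through (s,t) in the s direction
  have hcurve_s : ∀ (s t : ℝ), HasDerivAt (fun σ : ℝ => (σ, t)) ((1 : ℝ), (0 : ℝ)) s := by
    intro s t
    simpa using ((hasDerivAt_id s).prodMk (hasDerivAt_const s t))
  have hcurve_t : ∀ (s t : ℝ), HasDerivAt (fun τ : ℝ => (s, τ)) ((0 : ℝ), (1 : ℝ)) t := by
    intro s t
    simpa using ((hasDerivAt_const t s).prodMk (hasDerivAt_id t))
  -- partial derivative in s of F is v
  have hFs : ∀ (s t : ℝ), HasDerivAt (fun σ => F (σ, t)) (v (s, t)) s := by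
    intro s t
    exact (hFd (s, t)).hasFDerivAt.comp_hasDerivAt s (hcurve_s s t)
  -- partial derivative in t of F
  have hFt : ∀ (s t : ℝ), HasDerivAt (fun τ => F (s, τ)) (A (s, t) (0, 1)) t := by
    intro s t
    exact (hFd (s, t)).hasFDerivAt.comp_hasDerivAt t (hcurve_t s t)
  -- the ODE in terms of A
  have hODE : ∀ (s : ℝ), ∀ t ∈ Set.Icc (0 : ℝ) T, A (s, t) (0, 1) = f (F (s, t)) := by
    intro s t ht
    have h1 := hFt s t
    have h2 : HasDerivAt (fun τ => F (s, τ)) (f (F (s, t))) t := hYode (y0 + s • δ) t ht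
    exact h1.unique h2
  -- v (s, 0) = δ
  have hv0 : ∀ s : ℝ, v (s, 0) = δ := by
    intro s
    have h1 := hFs s 0
    have h2 : HasDerivAt (fun σ : ℝ => F (σ, 0)) δ s := by
      have : (fun σ : ℝ => F (σ, 0)) = fun σ : ℝ => y0 + σ • δ := by
        funext σ; simp [hFdef, hY0]
      rw [this]
      simpa using ((hasDerivAt_id s).smul_const δ).const_add y0
    exact h1.unique h2
  have hF0 : ∀ t : ℝ, F (0, t) = y t := by intro t; simp [hFdef, hy]
  -- variational equation: d/dt v(0,t) = Df(y t) (v(0,t))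
  have hvar : ∀ t ∈ Set.Icc (0 : ℝ) T,
      HasDerivAt (fun τ => v (0, τ)) (fderiv ℝ f (y t) (v (0, t))) t := by
    intro t ht
    set B : ℝ × ℝ →L[ℝ] (ℝ × ℝ →L[ℝ] EuclideanSpace ℝ (Fin N)) := fderiv ℝ A (0, t) with hBdef
    have hB : HasFDerivAt A B (0, t) := (hAd (0, t)).hasFDerivAt
    -- symmetry of second derivative
    have hsymm : B (0, 1) (1, 0) = B (1, 0) (0, 1) :=
      second_derivative_symmetric (fun p => (hFd p).hasFDerivAt) hB (0, 1) (1, 0)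
    -- derivative of τ ↦ v(0,τ)
    have h1 : HasDerivAt (fun τ => v (0, τ)) (B (0, 1) (1, 0)) t := by
      have hA' : HasDerivAt (fun τ => A (0, τ)) (B (0, 1)) t :=
        hB.comp_hasDerivAt t (hcurve_t 0 t)
      simpa using hA'.clm_apply (hasDerivAt_const t ((1 : ℝ), (0 : ℝ)))
    -- derivative in s of A(s,t)(0,1) = f(F(s,t))
    have h2 : HasDerivAt (fun s => A (s, t) (0, 1)) (B (1, 0) (0, 1)) 0 := by
      have hA' : HasDerivAt (fun s => A (s, t)) (B (1, 0)) 0 :=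
        hB.comp_hasDerivAt 0 (hcurve_s 0 t)
      simpa using hA'.clm_apply (hasDerivAt_const 0 ((0 : ℝ), (1 : ℝ)))
    have h3 : HasDerivAt (fun s => f (F (s, t))) (fderiv ℝ f (y t) (v (0, t))) 0 := by
      have hff : HasFDerivAt f (fderiv ℝ f (F (0, t))) (F (0, t)) :=
        (hf.differentiable (by simp) (F (0, t))).hasFDerivAt
      have := hff.comp_hasDerivAt 0 (hFs 0 t)
      rwa [hF0 t] at this
    have heq : (fun s => A (s, t) (0, 1)) = fun s => f (F (s, t)) := by
      funext s; exact hODE s t ht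
    have h2' : HasDerivAt (fun s => f (F (s, t))) (B (1, 0) (0, 1)) 0 := heq ▸ h2
    have : B (1, 0) (0, 1) = fderiv ℝ f (y t) (v (0, t)) := h2'.unique h3
    rw [hsymm, this] at h1
    exact h1
  -- partial derivative of o in z
  have hoz : ∀ (x : EuclideanSpace ℝ (Fin N)) (t : ℝ),
      HasFDerivAt (fun z => o z t) (fderiv ℝ (fun z => o z t) x) x := by
    intro x t
    have : DifferentiableAt ℝ (fun z => o z t) x := by
      have := (ho.differentiable (by simp) (x, t)).hasFDerivAt
      exact (this.comp x ((hasFDerivAt_id (𝕜 := ℝ) x).prodMk (hasFDerivAt_const t x))).differentiableAt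
    exact this.hasFDerivAt
  -- continuity of the partial derivative of o
  have hozc : Continuous (fun p : EuclideanSpace ℝ (Fin N) × ℝ => fderiv ℝ (fun z => o z p.2) p.1) := by
    have key : ∀ p : EuclideanSpace ℝ (Fin N) × ℝ, fderiv ℝ (fun z => o z p.2) p.1
        = (fderiv ℝ (fun q : EuclideanSpace ℝ (Fin N) × ℝ => o q.1 q.2) p).comp
          ((ContinuousLinearMap.id ℝ (EuclideanSpace ℝ (Fin N))).prod 0) := by
      rintro ⟨x, t⟩
      have h1 : HasFDerivAt (fun z : EuclideanSpace ℝ (Fin N) => (z, t))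
          ((ContinuousLinearMap.id ℝ (EuclideanSpace ℝ (Fin N))).prod 0) x :=
        (hasFDerivAt_id x).prodMk (hasFDerivAt_const t x)
      have h2 := ((ho.differentiable (by simp) (x, t)).hasFDerivAt).comp x h1
      exact h2.fderiv
    rw [continuous_congr (fun p => key p)]
    exact ((ho.continuous_fderiv (by simp)).clm_comp continuous_const)
  -- the integrand derivative
  set G : ℝ → ℝ → ℝ := fun s t => fderiv ℝ (fun z => o z t) (F (s, t)) (v (s, t)) with hGdef
  have hGc : Continuous (fun p : ℝ × ℝ => G p.1 p.2) := by
    apply Continuous.clm_apply _ hvc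
    exact hozc.comp ((hF.continuous).prodMk continuous_snd)
  -- derivative in s of the integrand
  have hdiff : ∀ (s t : ℝ), HasDerivAt (fun σ => o (F (σ, t)) t) (G s t) s := by
    intro s t
    exact (hoz (F (s, t)) t).comp_hasDerivAt s (hFs s t)
  -- FTC part: φ t = lam t (v (0, t))
  set φ : ℝ → ℝ := fun t => lam t (v (0, t)) with hφdef
  have hφ' : ∀ t ∈ Set.Icc (0 : ℝ) T, HasDerivAt φ (-(G 0 t)) t := by
    intro t ht
    have h1 := (hlam t ht).clm_apply (hvar t ht)
    have : (-(lam t).comp (fderiv ℝ f (y t)) - fderiv ℝ (fun z => o z t) (y t)) (v (0, t))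
        + lam t (fderiv ℝ f (y t) (v (0, t))) = -(G 0 t) := by
      simp [hGdef, hF0]
      ring
    rwa [this] at h1
  have hG0c : Continuous (fun t => G 0 t) := hGc.comp (continuous_const.prodMk continuous_id)
  have hG0int : IntervalIntegrable (fun t => G 0 t) MeasureTheory.volume 0 T :=
    hG0c.intervalIntegrable 0 T
  have hFTC : ∫ t in (0:ℝ)..T, -(G 0 t) = φ T - φ 0 := by
    apply intervalIntegral.integral_eq_sub_of_hasDerivAt
    · intro t ht
      rw [Set.uIcc_of_le hT.le] at ht
      exact hφ' t ht
    · exact hG0int.neg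
  have hint : ∫ t in (0:ℝ)..T, G 0 t = lam 0 δ := by
    have h0 : φ T = 0 := by simp [hφdef, hlamT]
    have h1 : φ 0 = lam 0 δ := by
      show lam 0 (v (0, 0)) = lam 0 δ
      rw [hv0 0]
    have := hFTC
    rw [intervalIntegral.integral_neg, h0, h1] at this
    linarith
  -- bound on G over a compact set
  obtain ⟨C, hC⟩ : ∃ C, ∀ p ∈ Set.Icc (-1:ℝ) 1 ×ˢ Set.uIcc (0:ℝ) T, ‖G p.1 p.2‖ ≤ C := by
    have hcpt : IsCompact (Set.Icc (-1:ℝ) 1 ×ˢ Set.uIcc (0:ℝ) T) :=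
      isCompact_Icc.prod isCompact_uIcc
    obtain ⟨C, hC⟩ := hcpt.exists_bound_of_continuousOn hGc.continuousOn
    exact ⟨C, hC⟩
  have cont1 : ∀ s : ℝ, Continuous (fun t => o (F (s, t)) t) := by
    intro s
    exact ho.continuous.comp ((hF.continuous.comp
      ((continuous_const : Continuous fun _ : ℝ => s).prodMk continuous_id)).prodMk
      continuous_id)
  have hbound : ∀ᵐ t ∂(MeasureTheory.volume : MeasureTheory.Measure ℝ), t ∈ Set.uIoc (0:ℝ) T →
      ∀ s ∈ Metric.ball (0:ℝ) 1, ‖G s t‖ ≤ C := by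
    apply Filter.Eventually.of_forall
    intro t ht s hs
    apply hC (s, t)
    have hsd := Metric.mem_ball.mp hs
    simp only [Real.dist_eq, sub_zero] at hsd
    have := abs_le.mp hsd.le
    exact ⟨⟨this.1, this.2⟩, Set.uIoc_subset_uIcc ht⟩
  have key := (intervalIntegral.hasDerivAt_integral_of_dominated_loc_of_deriv_le
    (F := fun s t => o (F (s, t)) t) (F' := G) (μ := MeasureTheory.volume)
    (x₀ := (0:ℝ)) (a := 0) (b := T) (bound := fun _ => C) (s := Metric.ball (0:ℝ) 1) (Metric.ball_mem_nhds 0 one_pos)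
    (Filter.Eventually.of_forall fun s => (cont1 s).aestronglyMeasurable)
    ((cont1 0).intervalIntegrable 0 T)
    hG0c.aestronglyMeasurable
    hbound
    intervalIntegrable_const
    (Filter.Eventually.of_forall fun t _ s _ => hdiff s t)).2
  rw [hint] at key
  exact key
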